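/- Let G be a group with a finite symmetric generating set S and let Φ be a uniformly continuous action of G on a metric space (X,d). For each x ∈ X, the set B[x] = {y ∈ X : y WR^S x} (the equivalence class of x under the weak relation WR^S) is closed in X and Φ-invariant, i.e. Φ_g(B[x]) ⊆ B[x] for all g ∈ G. -/

import Mathlib

/-- A weak `δ`-chain of `Φ` from `x` to `y` with respect to `S`: a finite
sequence `x = x_0, x_1, …, x_k = y` together with generators
`s_0, …, s_{k-1} ∈ S` such that `d(Φ_{s_i}(x_i), x_{i+1}) < δ` for all
`0 ≤ i < k`. -/
def WeakChain {G X : Type*} [Group G] [MetricSpace X]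
    (Φ : G → X → X) (S : Finset G) (δ : ℝ) (x y : X) : Prop :=
  ∃ (k : ℕ) (xs : ℕ → X) (ss : ℕ → G), xs 0 = x ∧ xs k = y ∧
    ∀ i < k, ss i ∈ S ∧ dist (Φ (ss i) (xs i)) (xs (i + 1)) < δ

/-- `x WR^S y` : for every `δ > 0` there are weak `δ`-chains from `x` to `y`
and from `y` to `x`. -/
def WeakRel {G X : Type*} [Group G] [MetricSpace X]
    (Φ : G → X → X) (S : Finset G) (x y : X) : Prop :=
  ∀ δ : ℝ, 0 < δ → WeakChain Φ S δ x y ∧ WeakChain Φ S δ y x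

/-!
Weak `δ`-chains are exactly the paths of the one-step relation `d(Φ_s a, b) < δ`, so `WR^S` is an
equivalence relation. A generator step followed by its inverse step links `y` to any point
`δ`-close to it, so a limit of points of `B[x]` is still weakly related to `x`. Finally `Φ_s y` and
`y` are linked by a single `s`- or `s⁻¹`-step, hence `Φ_g y WR^S y` for every `g` in the subgroup
generated by `S`, which is all of `G`.
-/

open Relation

theorem inv_apply_apply {G X : Type*} [Group G] {Φ : G → X → X} (hΦ1 : ∀ x : X, Φ 1 x = x)
    (hΦmul : ∀ g h : G, ∀ x : X, Φ (g * h) x = Φ g (Φ h x)) (g : G) (x : X) :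
    Φ g⁻¹ (Φ g x) = x := by
  rw [← hΦmul, inv_mul_cancel, hΦ1]

section WeakChains

variable {G X : Type*} [MetricSpace X] {Φ : G → X → X} {S : Finset G} {δ : ℝ}

variable (Φ S δ) in
def WeakStep (a b : X) : Prop :=
  ∃ s ∈ S, dist (Φ s a) b < δ

theorem weakStep_apply {s : G} (hs : s ∈ S) (hδ : 0 < δ) (x : X) : WeakStep Φ S δ x (Φ s x) :=
  ⟨s, hs, by simpa using hδ⟩

variable [Group G]

theorem weakChain_iff_reflTransGen {x y : X} :
    WeakChain Φ S δ x y ↔ ReflTransGen (WeakStep Φ S δ) x y := by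
  constructor
  · rintro ⟨k, xs, ss, rfl, rfl, hsteps⟩
    have hprefix : ∀ n ≤ k, ReflTransGen (WeakStep Φ S δ) (xs 0) (xs n) := by
      intro n hn
      induction n with
      | zero => exact .refl
      | succ n ih => exact (ih (by omega)).tail ⟨ss n, hsteps n (by omega)⟩
    exact hprefix k le_rfl
  · intro h
    induction h with
    | refl => exact ⟨0, fun _ => x, fun _ => 1, rfl, rfl, by simp⟩
    | @tail b c _ hbc ih =>
      obtain ⟨s, hs, hdist⟩ := hbc
      obtain ⟨k, xs, ss, hx0, hxk, hsteps⟩ := ih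
      refine ⟨k + 1, fun i => if i ≤ k then xs i else c, fun i => if i < k then ss i else s,
        by simpa using hx0, by simp, fun i hi => ?_⟩
      rcases Nat.lt_or_ge i k with hik | hik
      · simpa [hik, hik.le, Nat.succ_le_of_lt hik] using hsteps i hik
      · obtain rfl : i = k := by omega
        simpa [hxk] using ⟨hs, hdist⟩

theorem WeakChain.refl (x : X) : WeakChain Φ S δ x x :=
  weakChain_iff_reflTransGen.2 .refl

theorem WeakChain.trans {x y z : X} (hxy : WeakChain Φ S δ x y) (hyz : WeakChain Φ S δ y z) :
    WeakChain Φ S δ x z :=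
  weakChain_iff_reflTransGen.2
    ((weakChain_iff_reflTransGen.1 hxy).trans (weakChain_iff_reflTransGen.1 hyz))

theorem WeakChain.of_weakStep {x y : X} (h : WeakStep Φ S δ x y) : WeakChain Φ S δ x y :=
  weakChain_iff_reflTransGen.2 (.single h)

theorem WeakChain.eq_of_eq_empty (hS : S = ∅) {x y : X} (h : WeakChain Φ S δ x y) : x = y := by
  induction weakChain_iff_reflTransGen.1 h with
  | refl => rfl
  | tail _ hstep => obtain ⟨s, hs, -⟩ := hstep; simp [hS] at hs

theorem WeakRel.refl (x : X) : WeakRel Φ S x x :=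
  fun _ _ => ⟨.refl x, .refl x⟩

theorem WeakRel.symm {x y : X} (h : WeakRel Φ S x y) : WeakRel Φ S y x :=
  fun δ hδ => (h δ hδ).symm

theorem WeakRel.trans {x y z : X} (hxy : WeakRel Φ S x y) (hyz : WeakRel Φ S y z) :
    WeakRel Φ S x z :=
  fun δ hδ => ⟨(hxy δ hδ).1.trans (hyz δ hδ).1, (hyz δ hδ).2.trans (hxy δ hδ).2⟩

theorem WeakRel.eq_of_eq_empty (hS : S = ∅) {x y : X} (h : WeakRel Φ S x y) : x = y :=
  (h 1 one_pos).1.eq_of_eq_empty hS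

end WeakChains

section Action

variable {G X : Type*} [Group G] [MetricSpace X] {Φ : G → X → X} {S : Finset G}

theorem weakChain_of_dist_lt {s : G} (hs : s ∈ S) (hs' : s⁻¹ ∈ S)
    (hΦ1 : ∀ x : X, Φ 1 x = x)
    (hΦmul : ∀ g h : G, ∀ x : X, Φ (g * h) x = Φ g (Φ h x))
    {δ : ℝ} {x y : X} (h : dist x y < δ) : WeakChain Φ S δ x y :=
  (WeakChain.of_weakStep (weakStep_apply hs (dist_nonneg.trans_lt h) x)).trans
    (.of_weakStep ⟨s⁻¹, hs', by rwa [inv_apply_apply hΦ1 hΦmul]⟩)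

theorem weakRel_apply_self (hSsymm : ∀ s ∈ S, s⁻¹ ∈ S)
    (hSgen : Subgroup.closure (S : Set G) = ⊤)
    (hΦ1 : ∀ x : X, Φ 1 x = x)
    (hΦmul : ∀ g h : G, ∀ x : X, Φ (g * h) x = Φ g (Φ h x)) (g : G) (x : X) :
    WeakRel Φ S (Φ g x) x := by
  have hg : g ∈ Subgroup.closure (S : Set G) := hSgen ▸ Subgroup.mem_top g
  induction hg using Subgroup.closure_induction generalizing x with
  | mem s hs =>
    intro δ hδ
    refine ⟨.of_weakStep ⟨s⁻¹, hSsymm s hs, ?_⟩, .of_weakStep (weakStep_apply hs hδ x)⟩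
    rwa [inv_apply_apply hΦ1 hΦmul, dist_self]
  | one => rw [hΦ1]; exact .refl x
  | mul a b _ _ ha hb => rw [hΦmul]; exact (ha (Φ b x)).trans (hb x)
  | inv a _ ha => simpa [← hΦmul, hΦ1] using (ha (Φ a⁻¹ x)).symm

theorem isClosed_setOf_weakRel (hSsymm : ∀ s ∈ S, s⁻¹ ∈ S)
    (hΦ1 : ∀ x : X, Φ 1 x = x)
    (hΦmul : ∀ g h : G, ∀ x : X, Φ (g * h) x = Φ g (Φ h x)) (x : X) :
    IsClosed {y : X | WeakRel Φ S y x} := by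
  rcases S.eq_empty_or_nonempty with hS | ⟨s, hs⟩
  · have hclass : {y : X | WeakRel Φ S y x} = {x} :=
      Set.eq_singleton_iff_unique_mem.2 ⟨WeakRel.refl x, fun y hy => hy.eq_of_eq_empty hS⟩
    exact hclass ▸ isClosed_singleton
  refine isClosed_of_closure_subset fun y hy δ hδ => ?_
  obtain ⟨z, hz, hyz⟩ := Metric.mem_closure_iff.1 hy δ hδ
  exact ⟨(weakChain_of_dist_lt hs (hSsymm s hs) hΦ1 hΦmul hyz).trans (hz δ hδ).1,
    (hz δ hδ).2.trans (weakChain_of_dist_lt hs (hSsymm s hs) hΦ1 hΦmul (dist_comm y z ▸ hyz))⟩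

end Action

theorem weakRel_class_isClosed_and_invariant_general
    {G X : Type*} [Group G] [MetricSpace X]
    (Φ : G → X → X) (S : Finset G)
    (hSsymm : ∀ s ∈ S, s⁻¹ ∈ S)
    (hSgen : Subgroup.closure (S : Set G) = ⊤)
    (hΦ1 : ∀ x : X, Φ 1 x = x)
    (hΦmul : ∀ g h : G, ∀ x : X, Φ (g * h) x = Φ g (Φ h x))
    (x : X) :
    IsClosed {y : X | WeakRel Φ S y x} ∧
      ∀ g : G, Φ g '' {y : X | WeakRel Φ S y x} ⊆ {y : X | WeakRel Φ S y x} := by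
  refine ⟨isClosed_setOf_weakRel hSsymm hΦ1 hΦmul x, ?_⟩
  rintro g _ ⟨y, hy, rfl⟩
  exact (weakRel_apply_self hSsymm hSgen hΦ1 hΦmul g y).trans hy

/-- Each equivalence class `B[x] = {y : y WR^S x}` of the weak relation is
closed and `Φ`-invariant. -/
theorem weakRel_class_isClosed_and_invariant
    {G X : Type*} [Group G] [MetricSpace X]
    (Φ : G → X → X) (S : Finset G)
    (hSsymm : ∀ s ∈ S, s⁻¹ ∈ S)
    (hSgen : Subgroup.closure (S : Set G) = ⊤)
    (hΦ1 : ∀ x : X, Φ 1 x = x)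
    (hΦmul : ∀ g h : G, ∀ x : X, Φ (g * h) x = Φ g (Φ h x))
    (hΦuc : ∀ g : G, UniformContinuous (Φ g))
    (x : X) :
    IsClosed {y : X | WeakRel Φ S y x} ∧
      ∀ g : G, Φ g '' {y : X | WeakRel Φ S y x} ⊆ {y : X | WeakRel Φ S y x} :=
  weakRel_class_isClosed_and_invariant_general Φ S hSsymm hSgen hΦ1 hΦmul x
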